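/- arXiv:gr-qc/9811084 — 2 statements merged into one kernel-verified Lean document; each statement's English description precedes it below -/
import Mathlib

section
/- For the quasi-conformal coframe, the two-indexed B-object ⁽¹⁾B_{ab} = B_{abm}{}^m is given explicitly by: ⁽¹⁾B₀₀ = −e^{−2f}Δ̃φ; ⁽¹⁾B_{ii} = −e^{−2f}(Δ̃φ − φ_{ii}) for each spatial i (i.e. ⁽¹⁾B₁₁ = −e^{−2f}(φ₂₂+φ₃₃), etc.); ⁽¹⁾B_{ij} = e^{−2f}φ_{ij} for spatial i ≠ j; and ⁽¹⁾B_{0i} = ⁽¹⁾B_{i0} = 0. -/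
open scoped BigOperators

noncomputable section

/-- Partial derivative along coordinate `i` on `ℝ³`. -/
def pd (i : Fin 3) (f : (Fin 3 → ℝ) → ℝ) : (Fin 3 → ℝ) → ℝ :=
  fun x => fderiv ℝ f x (Pi.single i 1)

/-- Partial derivative indexed by a 4-index: zero for the time index `0`. -/
def pd4 (f : (Fin 3 → ℝ) → ℝ) (p : Fin 4) : (Fin 3 → ℝ) → ℝ :=
  if h : p = 0 then 0 else pd (p.pred h) f

/-- Signs of the Minkowski metric `η = diag(1,−1,−1,−1)`. -/
def epsM (a : Fin 4) : ℝ := if a = 0 then 1 else -1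

/-- The Minkowski metric `η = diag(1,−1,−1,−1)`. -/
def etaM (a b : Fin 4) : ℝ := if a = b then epsM a else 0

/-- Anholonomity objects `C^a_{mn}` of the quasi-conformal coframe
`ϑ⁰ = e^{−f}dt`, `ϑⁱ = e^{f}dxⁱ`:  `C⁰_{0i} = e^{−f}fᵢ`, `C^i_{ij} = −e^{−f}fⱼ`
(spatial `i ≠ j`), antisymmetric in the lower pair, all other components zero. -/
def Cob (f : (Fin 3 → ℝ) → ℝ) (a m n : Fin 4) : (Fin 3 → ℝ) → ℝ := fun x =>
  if a = 0 then
    Real.exp (-f x) * ((if m = 0 then pd4 f n x else 0) - (if n = 0 then pd4 f m x else 0))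
  else
    Real.exp (-f x) * ((if n = a then pd4 f m x else 0) - (if m = a then pd4 f n x else 0))

/-- The contraction `C_a := C^m_{am}`. -/
def Cone (f : (Fin 3 → ℝ) → ℝ) (a : Fin 4) : (Fin 3 → ℝ) → ℝ :=
  fun x => ∑ m : Fin 4, Cob f m a m x

/-- The B-objects `B^a_{mn0} := 0`, `B^a_{mnp} := e^{−f} ∂_p C^a_{mn}` for `p = 1,2,3`. -/
def Bob (f : (Fin 3 → ℝ) → ℝ) (a m n p : Fin 4) : (Fin 3 → ℝ) → ℝ :=
  fun x => Real.exp (-f x) * pd4 (Cob f a m n) p x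

/-- `⁽¹⁾B_{ab} := B_{abm}{}^m` (indices moved with `η`). -/
def B1 (f : (Fin 3 → ℝ) → ℝ) (a b : Fin 4) : (Fin 3 → ℝ) → ℝ :=
  fun x => epsM a * ∑ m : Fin 4, epsM m * Bob f a b m m x

/-- `⁽²⁾B_{ab} := B^m{}_{mab}`. -/
def B2 (f : (Fin 3 → ℝ) → ℝ) (a b : Fin 4) : (Fin 3 → ℝ) → ℝ :=
  fun x => ∑ m : Fin 4, Bob f m m a b x

/-- `⁽³⁾B_{ab} := B^m{}_{abm}`. -/
def B3 (f : (Fin 3 → ℝ) → ℝ) (a b : Fin 4) : (Fin 3 → ℝ) → ℝ :=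
  fun x => ∑ m : Fin 4, Bob f m a b m x

/-- The scalar B-object `B := η^{ab}⁽¹⁾B_{ab}`. -/
def Bscalar (f : (Fin 3 → ℝ) → ℝ) : (Fin 3 → ℝ) → ℝ :=
  fun x => ∑ a : Fin 4, epsM a * B1 f a a x

/-- `⁽¹⁾A_{ab} := C_{abm}C^m`. -/
def A1 (f : (Fin 3 → ℝ) → ℝ) (a b : Fin 4) : (Fin 3 → ℝ) → ℝ :=
  fun x => epsM a * ∑ m : Fin 4, epsM m * Cob f a b m x * Cone f m x

/-- `⁽²⁾A_{ab} := C_{mab}C^m`. -/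
def A2 (f : (Fin 3 → ℝ) → ℝ) (a b : Fin 4) : (Fin 3 → ℝ) → ℝ :=
  fun x => ∑ m : Fin 4, Cob f m a b x * Cone f m x

/-- `⁽³⁾A_{ab} := C_{amn}C_b{}^{mn}`. -/
def A3 (f : (Fin 3 → ℝ) → ℝ) (a b : Fin 4) : (Fin 3 → ℝ) → ℝ :=
  fun x => epsM a * epsM b *
    ∑ m : Fin 4, ∑ n : Fin 4, epsM m * epsM n * Cob f a m n x * Cob f b m n x

/-- `⁽⁴⁾A_{ab} := C_{amn}C^m{}_b{}^n`. -/
def A4 (f : (Fin 3 → ℝ) → ℝ) (a b : Fin 4) : (Fin 3 → ℝ) → ℝ :=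
  fun x => epsM a * ∑ m : Fin 4, ∑ n : Fin 4, epsM n * Cob f a m n x * Cob f m b n x

/-- `⁽⁵⁾A_{ab} := C_{man}C^n{}_b{}^m`. -/
def A5 (f : (Fin 3 → ℝ) → ℝ) (a b : Fin 4) : (Fin 3 → ℝ) → ℝ :=
  fun x => ∑ m : Fin 4, ∑ n : Fin 4, Cob f m a n x * Cob f n b m x

/-- `⁽⁶⁾A_{ab} := C_{man}C^m{}_b{}^n`. -/
def A6 (f : (Fin 3 → ℝ) → ℝ) (a b : Fin 4) : (Fin 3 → ℝ) → ℝ :=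
  fun x => ∑ m : Fin 4, ∑ n : Fin 4, epsM m * epsM n * Cob f m a n x * Cob f m b n x

/-- `⁽⁷⁾A_{ab} := C_a C_b`. -/
def A7 (f : (Fin 3 → ℝ) → ℝ) (a b : Fin 4) : (Fin 3 → ℝ) → ℝ :=
  fun x => Cone f a x * Cone f b x

/-- `⁽¹⁾A := η^{ab}⁽¹⁾A_{ab}`. -/
def A1s (f : (Fin 3 → ℝ) → ℝ) : (Fin 3 → ℝ) → ℝ :=
  fun x => ∑ a : Fin 4, epsM a * A1 f a a x

/-- `⁽²⁾A := η^{ab}⁽³⁾A_{ab}`. -/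
def A2s (f : (Fin 3 → ℝ) → ℝ) : (Fin 3 → ℝ) → ℝ :=
  fun x => ∑ a : Fin 4, epsM a * A3 f a a x

/-- `⁽³⁾A := η^{ab}⁽⁴⁾A_{ab}`. -/
def A3s (f : (Fin 3 → ℝ) → ℝ) : (Fin 3 → ℝ) → ℝ :=
  fun x => ∑ a : Fin 4, epsM a * A4 f a a x

/-- `φ_{ij} := f_{ij} − fᵢfⱼ`. -/
def phiM (f : (Fin 3 → ℝ) → ℝ) (i j : Fin 3) : (Fin 3 → ℝ) → ℝ :=
  fun x => pd i (pd j f) x - pd i f x * pd j f x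

/-- `Δ̃φ := φ₁₁ + φ₂₂ + φ₃₃`. -/
def tphi (f : (Fin 3 → ℝ) → ℝ) : (Fin 3 → ℝ) → ℝ :=
  fun x => ∑ i : Fin 3, phiM f i i x

/-- The Laplacian `Δf := f₁₁ + f₂₂ + f₃₃`. -/
def lap (f : (Fin 3 → ℝ) → ℝ) : (Fin 3 → ℝ) → ℝ :=
  fun x => ∑ i : Fin 3, pd i (pd i f) x

/-- `∇²f := f₁² + f₂² + f₃²`. -/
def grad2 (f : (Fin 3 → ℝ) → ℝ) : (Fin 3 → ℝ) → ℝ :=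
  fun x => ∑ i : Fin 3, pd i f x ^ 2

/-- The leading (second order) part
`L_{ab} = β₁⁽¹⁾B_{(ab)} + β₂⁽²⁾B_{(ab)} + β₃⁽³⁾B_{ab} + β₄η_{ab}B + β₅⁽¹⁾B_{[ab]} + β₆⁽²⁾B_{[ab]}`. -/
def Lmat (β₁ β₂ β₃ β₄ β₅ β₆ : ℝ) (f : (Fin 3 → ℝ) → ℝ) (a b : Fin 4) :
    (Fin 3 → ℝ) → ℝ := fun x =>
  β₁ * ((B1 f a b x + B1 f b a x) / 2) + β₂ * ((B2 f a b x + B2 f b a x) / 2) +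
  β₃ * B3 f a b x + β₄ * etaM a b * Bscalar f x +
  β₅ * ((B1 f a b x - B1 f b a x) / 2) + β₆ * ((B2 f a b x - B2 f b a x) / 2)

/-- The quadratic part `Q_{ab}`. -/
def Qmat (α₁ α₂ α₃ α₄ α₅ α₆ α₇ α₈ α₉ α₁₀ α₁₁ α₁₂ : ℝ) (f : (Fin 3 → ℝ) → ℝ)
    (a b : Fin 4) : (Fin 3 → ℝ) → ℝ := fun x =>
  α₁ * ((A1 f a b x + A1 f b a x) / 2) + α₂ * A2 f a b x + α₃ * A3 f a b x +
  α₄ * ((A4 f a b x + A4 f b a x) / 2) + α₅ * A5 f a b x + α₆ * A6 f a b x +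
  α₇ * A7 f a b x + α₈ * ((A1 f a b x - A1 f b a x) / 2) +
  α₉ * ((A4 f a b x - A4 f b a x) / 2) +
  etaM a b * (α₁₀ * A1s f x + α₁₁ * A2s f x + α₁₂ * A3s f x)

/-- `diag(β₁−β₄, β₁+β₄, β₁+β₄, β₁+β₄)`. -/
def diagM (β₁ β₄ : ℝ) (a b : Fin 4) : ℝ :=
  if a = b then (if a = 0 then β₁ - β₄ else β₁ + β₄) else 0

/-!
Only spatial derivatives enter the B-objects, and every nonzero anholonomity component is
`±e^{−f} fⱼ`. Since `∂ᵢ(e^{−f} fⱼ) = e^{−f} φᵢⱼ`, each component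
`⁽¹⁾B_{ab} = −η_{aa} e^{−f} ∑ₖ ∂ₖ C^a_{bk}` is `e^{−2f}` times a signed sum of `φ`'s: for `a = b = 0`
all of `φ₁₁, φ₂₂, φ₃₃`; for `a = i`, `b = j` the single term `φᵢⱼ` from `C^i_{ji}` when `i ≠ j`,
and `−∑_{k ≠ i} φₖₖ` from `C^i_{ik}` when `i = j`; the mixed components involve no nonzero `C`.
-/

section PartialDerivatives

variable {f : (Fin 3 → ℝ) → ℝ}

lemma pd_zero (i : Fin 3) : pd i (0 : (Fin 3 → ℝ) → ℝ) = 0 := by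
  ext x; simp [pd]

lemma pd_neg (g : (Fin 3 → ℝ) → ℝ) (i : Fin 3) (x : Fin 3 → ℝ) :
    pd i (fun y => -g y) x = -pd i g x := by
  simp [pd]

lemma pd4_succ (g : (Fin 3 → ℝ) → ℝ) (k : Fin 3) : pd4 g k.succ = pd k g := by
  simp [pd4, Fin.succ_ne_zero]

lemma ContDiff.pd (hf : ContDiff ℝ (⊤ : ℕ∞) f) (j : Fin 3) : ContDiff ℝ (⊤ : ℕ∞) (pd j f) :=
  (hf.fderiv_right (by exact_mod_cast le_top)).clm_apply contDiff_const

lemma pd_exp_neg_mul_pd (hf : ContDiff ℝ (⊤ : ℕ∞) f) (i j : Fin 3) (x : Fin 3 → ℝ) :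
    pd i (fun y => Real.exp (-f y) * pd j f y) x = Real.exp (-f x) * phiM f i j x := by
  have hfx : DifferentiableAt ℝ f x := hf.differentiable (by simp) x
  have hfj : DifferentiableAt ℝ (pd j f) x := (hf.pd j).differentiable (by simp) x
  have hef : DifferentiableAt ℝ (fun y => Real.exp (-f y)) x := hfx.neg.exp
  rw [pd, fderiv_fun_mul hef hfj, fderiv_exp (f := fun y => -f y) hfx.neg, fderiv_fun_neg]
  simp only [pd, phiM, add_apply, smul_apply, neg_apply, smul_neg, smul_eq_mul]
  ring

end PartialDerivatives

section Anholonomity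

variable (f : (Fin 3 → ℝ) → ℝ)

lemma cob_zero_zero_succ (k : Fin 3) :
    Cob f 0 0 k.succ = fun y => Real.exp (-f y) * pd k f y := by
  ext y; simp [Cob, pd4_succ, Fin.succ_ne_zero]

lemma cob_zero_succ_succ (j k : Fin 3) : Cob f 0 j.succ k.succ = 0 := by
  ext y; simp [Cob, Fin.succ_ne_zero]

lemma cob_succ_zero_succ (i k : Fin 3) : Cob f i.succ 0 k.succ = 0 := by
  ext y; simp [Cob, pd4, Fin.succ_ne_zero, (Fin.succ_ne_zero i).symm]

lemma cob_succ_succ_self {i j : Fin 3} (hij : i ≠ j) :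
    Cob f i.succ j.succ i.succ = fun y => Real.exp (-f y) * pd j f y := by
  ext y; simp [Cob, pd4_succ, Fin.succ_ne_zero, hij.symm]

lemma cob_succ_succ_of_ne {i j k : Fin 3} (hij : i ≠ j) (hik : i ≠ k) :
    Cob f i.succ j.succ k.succ = 0 := by
  ext y; simp [Cob, Fin.succ_ne_zero, hij.symm, hik.symm]

lemma cob_succ_self_succ {i k : Fin 3} (hik : i ≠ k) :
    Cob f i.succ i.succ k.succ = fun y => -(Real.exp (-f y) * pd k f y) := by
  ext y; simp [Cob, pd4_succ, Fin.succ_ne_zero, hik.symm]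

lemma cob_succ_self_self (i : Fin 3) : Cob f i.succ i.succ i.succ = 0 := by
  ext y; simp [Cob, Fin.succ_ne_zero]

lemma b1_eq_sum_pd (a b : Fin 4) (x : Fin 3 → ℝ) :
    B1 f a b x = -(epsM a * Real.exp (-f x)) * ∑ k : Fin 3, pd k (Cob f a b k.succ) x := by
  simp only [B1, Bob, Fin.sum_univ_succ (n := 3), epsM, pd4_succ, Fin.succ_ne_zero,
    if_true, if_false]
  simp [pd4, Finset.mul_sum]

end Anholonomity

/-- for the quasi-conformal coframe, the two-indexed B-object
`⁽¹⁾B_{ab} = B_{abm}{}^m` is given by `⁽¹⁾B₀₀ = −e^{−2f}Δ̃φ`,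
`⁽¹⁾B_{ii} = −e^{−2f}(Δ̃φ − φ_{ii})`, `⁽¹⁾B_{ij} = e^{−2f}φ_{ij}` for spatial `i ≠ j`,
and `⁽¹⁾B_{0i} = ⁽¹⁾B_{i0} = 0`. -/
theorem B1_explicit (f : (Fin 3 → ℝ) → ℝ) (hf : ContDiff ℝ (⊤ : ℕ∞) f)
    (x : Fin 3 → ℝ) :
    B1 f 0 0 x = -Real.exp (-2 * f x) * tphi f x ∧
    (∀ i : Fin 3, B1 f i.succ i.succ x =
      -Real.exp (-2 * f x) * (tphi f x - phiM f i i x)) ∧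
    (∀ i j : Fin 3, i ≠ j →
      B1 f i.succ j.succ x = Real.exp (-2 * f x) * phiM f i j x) ∧
    (∀ i : Fin 3, B1 f 0 i.succ x = 0 ∧ B1 f i.succ 0 x = 0) := by
  have hexp : Real.exp (-2 * f x) = Real.exp (-f x) * Real.exp (-f x) := by
    rw [← Real.exp_add]; ring_nf
  rw [hexp]
  refine ⟨?_, fun i => ?_, fun i j hij => ?_, fun i => ⟨?_, ?_⟩⟩
  · simp only [b1_eq_sum_pd, cob_zero_zero_succ, pd_exp_neg_mul_pd hf, ← Finset.mul_sum]
    simp only [epsM, ↓reduceIte, tphi]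
    ring
  · rw [b1_eq_sum_pd, ← Finset.add_sum_erase _ _ (Finset.mem_univ i), cob_succ_self_self,
      pd_zero, Finset.sum_congr rfl fun k hk => by
        rw [cob_succ_self_succ f (Finset.ne_of_mem_erase hk).symm, pd_neg, pd_exp_neg_mul_pd hf],
      tphi, ← Finset.sum_erase_eq_sub (Finset.mem_univ i)]
    simp only [epsM, Fin.succ_ne_zero, if_false, Pi.zero_apply, zero_add,
      Finset.sum_neg_distrib, ← Finset.mul_sum]
    ring
  · rw [b1_eq_sum_pd, Finset.sum_eq_single i (fun k _ hki => by
      rw [cob_succ_succ_of_ne f hij (Ne.symm hki), pd_zero, Pi.zero_apply]) (by simp),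
      cob_succ_succ_self f hij, pd_exp_neg_mul_pd hf]
    simp only [epsM, Fin.succ_ne_zero, if_false]
    ring
  · simp [b1_eq_sum_pd, cob_zero_succ_succ, pd_zero]
  · simp [b1_eq_sum_pd, cob_succ_zero_succ, pd_zero]
end
end

section
/- For the quasi-conformal coframe, the quadratic invariant ⁽¹⁾A_{ab} = C_{abm}C^m is given explicitly by: ⁽¹⁾A₀₀ = −e^{−2f}∇²f; ⁽¹⁾A_{ii} = −e^{−2f}(∇²f − fᵢ²) for each spatial i; ⁽¹⁾A_{ij} = e^{−2f}fᵢfⱼ for spatial i ≠ j; ⁽¹⁾A_{0i} = ⁽¹⁾A_{i0} = 0. In particular ⁽¹⁾A_{ab} is symmetric for this coframe, and its trace is η^{ab}⁽¹⁾A_{ab} = e^{−2f}∇²f. -/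
open scoped BigOperators

noncomputable section

lemma pd4_zero (f : (Fin 3 → ℝ) → ℝ) : pd4 f 0 = 0 := rfl
lemma pd4_one (f : (Fin 3 → ℝ) → ℝ) : pd4 f 1 = pd 0 f := rfl
lemma pd4_two (f : (Fin 3 → ℝ) → ℝ) : pd4 f 2 = pd 1 f := rfl
lemma pd4_three (f : (Fin 3 → ℝ) → ℝ) : pd4 f 3 = pd 2 f := rfl

lemma fin3_mk0 (h : 0 < 3) : (⟨0, h⟩ : Fin 3) = 0 := rfl
lemma fin3_mk1 (h : 1 < 3) : (⟨1, h⟩ : Fin 3) = 1 := rfl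
lemma fin3_mk2 (h : 2 < 3) : (⟨2, h⟩ : Fin 3) = 2 := rfl
lemma fin3_succ0 : Fin.succ (0 : Fin 3) = 1 := rfl
lemma fin3_succ1 : Fin.succ (1 : Fin 3) = 2 := rfl
lemma fin3_succ2 : Fin.succ (2 : Fin 3) = 3 := rfl
lemma fin4_mk0 (h : 0 < 4) : (⟨0, h⟩ : Fin 4) = 0 := rfl
lemma fin4_mk1 (h : 1 < 4) : (⟨1, h⟩ : Fin 4) = 1 := rfl
lemma fin4_mk2 (h : 2 < 4) : (⟨2, h⟩ : Fin 4) = 2 := rfl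
lemma fin4_mk3 (h : 3 < 4) : (⟨3, h⟩ : Fin 4) = 3 := rfl

set_option maxHeartbeats 2000000 in
/-- for the quasi-conformal coframe, `⁽¹⁾A_{ab} = C_{abm}C^m` is given by
`⁽¹⁾A₀₀ = −e^{−2f}∇²f`, `⁽¹⁾A_{ii} = −e^{−2f}(∇²f − fᵢ²)`, `⁽¹⁾A_{ij} = e^{−2f}fᵢfⱼ` for
spatial `i ≠ j`, and vanishing time–space entries; in particular it is symmetric and its
trace is `η^{ab}⁽¹⁾A_{ab} = e^{−2f}∇²f`. -/
theorem A1_explicit (f : (Fin 3 → ℝ) → ℝ) (hf : ContDiff ℝ (⊤ : ℕ∞) f)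
    (x : Fin 3 → ℝ) :
    A1 f 0 0 x = -Real.exp (-2 * f x) * grad2 f x ∧
    (∀ i : Fin 3, A1 f i.succ i.succ x =
      -Real.exp (-2 * f x) * (grad2 f x - pd i f x ^ 2)) ∧
    (∀ i j : Fin 3, i ≠ j →
      A1 f i.succ j.succ x = Real.exp (-2 * f x) * (pd i f x * pd j f x)) ∧
    (∀ i : Fin 3, A1 f 0 i.succ x = 0 ∧ A1 f i.succ 0 x = 0) ∧
    (∀ a b : Fin 4, A1 f a b x = A1 f b a x) ∧
    (∑ a : Fin 4, epsM a * A1 f a a x) = Real.exp (-2 * f x) * grad2 f x :=  by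
  have hexp : Real.exp (-f x) ^ 2 = Real.exp (-2 * f x) := by
    rw [sq, ← Real.exp_add]; ring_nf
  refine ⟨?_, ?_, ?_, ?_, ?_, ?_⟩
  · simp (config := { decide := true }) only [A1, Cone, Cob, epsM, grad2,
      Fin.sum_univ_four, Fin.sum_univ_three, pd4_zero, pd4_one, pd4_two, pd4_three,
        fin3_mk0, fin3_mk1, fin3_mk2, fin3_succ0, fin3_succ1, fin3_succ2, fin4_mk0, fin4_mk1, fin4_mk2, fin4_mk3,
      if_true, if_false, Pi.zero_apply]
    rw [← hexp]; ring
  · intro i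
    fin_cases i <;>
    · simp (config := { decide := true }) only [A1, Cone, Cob, epsM, grad2,
        Fin.sum_univ_four, Fin.sum_univ_three, pd4_zero, pd4_one, pd4_two, pd4_three,
        fin3_mk0, fin3_mk1, fin3_mk2, fin3_succ0, fin3_succ1, fin3_succ2, fin4_mk0, fin4_mk1, fin4_mk2, fin4_mk3,
        Fin.isValue, if_true, if_false, Pi.zero_apply]
      rw [← hexp]; ring
  · intro i j hij
    fin_cases i <;> fin_cases j <;>
      first
      | exact absurd rfl hij
      | · simp (config := { decide := true }) only [A1, Cone, Cob, epsM, grad2,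
            Fin.sum_univ_four, Fin.sum_univ_three, pd4_zero, pd4_one, pd4_two, pd4_three,
        fin3_mk0, fin3_mk1, fin3_mk2, fin3_succ0, fin3_succ1, fin3_succ2, fin4_mk0, fin4_mk1, fin4_mk2, fin4_mk3,
            Fin.isValue, if_true, if_false, Pi.zero_apply]
          rw [← hexp]; ring
  · intro i
    fin_cases i <;>
    · constructor <;>
        simp (config := { decide := true }) only [A1, Cone, Cob, epsM,
          Fin.sum_univ_four, pd4_zero, pd4_one, pd4_two, pd4_three,
        fin3_mk0, fin3_mk1, fin3_mk2, fin3_succ0, fin3_succ1, fin3_succ2, fin4_mk0, fin4_mk1, fin4_mk2, fin4_mk3,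
          Fin.isValue, if_true, if_false, Pi.zero_apply] <;>
        ring
  · intro a b
    fin_cases a <;> fin_cases b <;>
      first
      | rfl
      | · simp (config := { decide := true }) only [A1, Cone, Cob, epsM,
            Fin.sum_univ_four, pd4_zero, pd4_one, pd4_two, pd4_three,
        fin3_mk0, fin3_mk1, fin3_mk2, fin3_succ0, fin3_succ1, fin3_succ2, fin4_mk0, fin4_mk1, fin4_mk2, fin4_mk3,
            Fin.isValue, if_true, if_false, Pi.zero_apply]
          ring
  · simp (config := { decide := true }) only [A1, Cone, Cob, epsM, grad2,
      Fin.sum_univ_four, Fin.sum_univ_three, pd4_zero, pd4_one, pd4_two, pd4_three,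
        fin3_mk0, fin3_mk1, fin3_mk2, fin3_succ0, fin3_succ1, fin3_succ2, fin4_mk0, fin4_mk1, fin4_mk2, fin4_mk3,
      Fin.isValue, if_true, if_false, Pi.zero_apply]
    rw [← hexp]; ring
end
end
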